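/- Let m < −1 be a real number and let (a(R))_{R≥1} be a family of bounded linear operators on ℓ²(ℤ) for which there exists C > 0 such that for all R ≥ 1 and all u ∈ ℓ²(ℤ), ∑_{n∈ℤ} |(a(R) u)(n)|²·(n² + R²)^{−m} ≤ C²·∑_{n∈ℤ} |u(n)|². Then there exists C' > 0 such that for all R ≥ 1, ∑_{k∈ℤ} |⟪e_k, a(R) e_k⟫| ≤ C'·R^{m+1}. In particular the diagonal of a(R) is absolutely summable and the trace of a(R) is O(R^{m+1}) as R → ∞. -/

import Mathlib

noncomputable section

/-- `ℓ²(ℤ)`, the Hilbert space of square-summable complex sequences indexed by `ℤ`. -/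
abbrev l2Z : Type := lp (fun _ : ℤ => ℂ) 2

/-- The standard orthonormal basis vector `e n` of `ℓ²(ℤ)`. -/
def e (n : ℤ) : l2Z := lp.single 2 n 1

/-- The matrix entry `a_{ij} = ⟪e_i, A e_j⟫` of a bounded operator on `ℓ²(ℤ)`. -/
def matrixEntry (A : l2Z →L[ℂ] l2Z) (i j : ℤ) : ℂ := @inner ℂ _ _ (e i) (A (e j))

/-! Testing the weighted bound on `u = e k` and keeping only the `k`-th term gives
`|a_kk| ≤ C (k² + R²)^{m/2} ≤ C 2^{-m/2} (|k| + R)^m`. Summing over `k ∈ ℤ` is controlled by the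
integral test: `∑_{n ≥ 1} (n + R)^m ≤ ∫_0^∞ (x + R)^m dx = R^{m+1} / (-(m + 1))` since `m < -1`. -/

open Real Set MeasureTheory

lemma HasSum.int_comp_abs {E : Type*} [AddCommMonoid E] [TopologicalSpace E] [ContinuousAdd E]
    {f : ℝ → E} {S : E} (hS : HasSum (fun n : ℕ => f (n + 1 : ℕ)) S) :
    HasSum (fun k : ℤ => f |(k : ℝ)|) (f 0 + 2 • S) := by
  have abs_succ (n : ℕ) : |((n : ℝ) + 1)| = (n + 1 : ℕ) := by
    push_cast; exact abs_of_nonneg (by positivity)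
  have h := HasSum.of_add_one_of_neg_add_one (f := fun k : ℤ => f |(k : ℝ)|) (m := S) (m' := S)
    (by simpa only [Int.cast_add, Int.cast_natCast, Int.cast_one, abs_succ] using hS)
    (by simpa only [Int.cast_neg, Int.cast_add, Int.cast_natCast, Int.cast_one, abs_neg, abs_succ]
      using hS)
  rw [Int.cast_zero, abs_zero] at h
  convert h using 1
  abel

section RpowSums

variable {m R : ℝ}

lemma integral_Ioi_zero_add_rpow (hm : m < -1) (hR : 0 < R) :
    ∫ x in Ioi (0 : ℝ), (x + R) ^ m = -R ^ (m + 1) / (m + 1) := by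
  have := (measurePreserving_add_right volume R).setIntegral_preimage_emb
    (measurableEmbedding_addRight R) (fun x => x ^ m) (Ioi R)
  rw [preimage_add_const_Ioi, sub_self] at this
  rw [this, integral_Ioi_rpow_of_lt hm hR]

lemma antitoneOn_add_rpow (hm : m ≤ 0) (hR : 0 < R) :
    AntitoneOn (fun x : ℝ => (x + R) ^ m) (Ici 0) := fun x hx _ _ hxy =>
  rpow_le_rpow_of_nonpos (by linarith [mem_Ici.mp hx]) (by linarith) hm

lemma summable_nat_add_rpow (hm : m < -1) (hR : 0 < R) :
    Summable (fun n : ℕ => ((n : ℝ) + R) ^ m) :=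
  (antitoneOn_add_rpow (by linarith) hR).summable_of_integrableOn_Ioi_zero
    (integrableOn_add_rpow_Ioi_of_lt hm (by linarith))
    fun x hx => rpow_nonneg (by linarith [mem_Ioi.mp hx]) m

lemma tsum_nat_succ_add_rpow_le (hm : m < -1) (hR : 0 < R) :
    ∑' n : ℕ, (((n + 1 : ℕ) : ℝ) + R) ^ m ≤ -R ^ (m + 1) / (m + 1) := by
  rw [← integral_Ioi_zero_add_rpow hm hR]
  exact (antitoneOn_add_rpow (by linarith) hR).tsum_add_one_le_integral
    (integrableOn_add_rpow_Ioi_of_lt hm (by linarith))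
    fun x hx => rpow_nonneg (by linarith [mem_Ioi.mp hx]) m

lemma hasSum_int_abs_add_rpow (hm : m < -1) (hR : 0 < R) :
    HasSum (fun k : ℤ => (|(k : ℝ)| + R) ^ m)
      (R ^ m + 2 • ∑' n : ℕ, (((n + 1 : ℕ) : ℝ) + R) ^ m) := by
  simpa only [zero_add] using HasSum.int_comp_abs (f := fun x : ℝ => (x + R) ^ m)
    ((summable_nat_add_iff 1).mpr (summable_nat_add_rpow hm hR)).hasSum

lemma tsum_int_abs_add_rpow_le (hm : m < -1) (hR : 1 ≤ R) :
    ∑' k : ℤ, (|(k : ℝ)| + R) ^ m ≤ (1 - 2 / (m + 1)) * R ^ (m + 1) := by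
  have hR0 : 0 < R := by linarith
  rw [(hasSum_int_abs_add_rpow hm hR0).tsum_eq, nsmul_eq_mul, Nat.cast_ofNat]
  have htail := tsum_nat_succ_add_rpow_le hm hR0
  have hRm : R ^ m ≤ R ^ (m + 1) := rpow_le_rpow_of_exponent_le hR (by linarith)
  have hsplit :
      (1 - 2 / (m + 1)) * R ^ (m + 1) = R ^ (m + 1) + 2 * (-R ^ (m + 1) / (m + 1)) := by
    ring
  linarith

end RpowSums

lemma rpow_sq_add_sq_le {x y m : ℝ} (hy : 0 < y) (hm : m ≤ 0) :
    (x ^ 2 + y ^ 2) ^ (m / 2) ≤ 2 ^ (-(m / 2)) * (|x| + y) ^ m := by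
  have hpos : 0 < |x| + y := by positivity
  have hle : (|x| + y) ^ 2 / 2 ≤ x ^ 2 + y ^ 2 := by
    nlinarith [sq_abs x, sq_nonneg (|x| - y)]
  calc (x ^ 2 + y ^ 2) ^ (m / 2) ≤ ((|x| + y) ^ 2 / 2) ^ (m / 2) :=
        rpow_le_rpow_of_nonpos (by positivity) hle (by linarith)
    _ = 2 ^ (-(m / 2)) * (|x| + y) ^ m := by
        rw [div_rpow (by positivity) zero_le_two, ← rpow_natCast, ← rpow_mul hpos.le,
          rpow_neg zero_le_two]
        ring_nf

lemma le_mul_rpow_of_sq_mul_rpow_le {x C t m : ℝ} (hx : 0 ≤ x) (hC : 0 ≤ C) (ht : 0 < t)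
    (h : x ^ 2 * t ^ (-m) ≤ C ^ 2) : x ≤ C * t ^ (m / 2) := by
  rw [← sq_le_sq₀ hx (by positivity), mul_pow, ← rpow_natCast (t ^ (m / 2)), ← rpow_mul ht.le]
  rw [rpow_neg ht.le, ← div_eq_mul_inv, div_le_iff₀ (rpow_pos_of_pos ht m)] at h
  convert h using 3
  push_cast; ring

lemma matrixEntry_eq_apply (A : l2Z →L[ℂ] l2Z) (i j : ℤ) : matrixEntry A i j = A (e j) i := by
  simp [matrixEntry, e, lp.inner_single_left]

lemma tsum_norm_e_sq (k : ℤ) : ∑' n : ℤ, ‖e k n‖ ^ 2 = 1 := by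
  rw [tsum_eq_single k]
  · simp [e]
  · intro n hn
    simp [e, hn]

lemma norm_matrixEntry_self_le {A : l2Z →L[ℂ] l2Z} {m R C : ℝ} {k : ℤ} (hm : m ≤ 0)
    (hR : 0 < R) (hC : 0 ≤ C)
    (hA : Summable (fun n : ℤ => ‖A (e k) n‖ ^ 2 * ((n : ℝ) ^ 2 + R ^ 2) ^ (-m)) ∧
      ∑' n : ℤ, ‖A (e k) n‖ ^ 2 * ((n : ℝ) ^ 2 + R ^ 2) ^ (-m) ≤
        C ^ 2 * ∑' n : ℤ, ‖e k n‖ ^ 2) :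
    ‖matrixEntry A k k‖ ≤ C * 2 ^ (-(m / 2)) * (|(k : ℝ)| + R) ^ m := by
  obtain ⟨hsum, hbound⟩ := hA
  rw [tsum_norm_e_sq, mul_one] at hbound
  have hdiag : ‖A (e k) k‖ ^ 2 * ((k : ℝ) ^ 2 + R ^ 2) ^ (-m) ≤ C ^ 2 :=
    (hsum.le_tsum k fun n _ => by positivity).trans hbound
  rw [matrixEntry_eq_apply, mul_assoc]
  calc ‖A (e k) k‖ ≤ C * ((k : ℝ) ^ 2 + R ^ 2) ^ (m / 2) :=
        le_mul_rpow_of_sq_mul_rpow_le (norm_nonneg _) hC (by positivity) hdiag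
    _ ≤ C * (2 ^ (-(m / 2)) * (|(k : ℝ)| + R) ^ m) :=
        mul_le_mul_of_nonneg_left (rpow_sq_add_sq_le hR hm) hC

/-- trace estimate, Lemma 4 item 1: if `(a(R))_{R ≥ 1}` is a family of
operators of order `m < -1`, i.e. uniformly bounded from `ℓ²(ℤ)` into the weighted
space with weight `μ_{-m,R}(n) = (n²+R²)^{-m}`, then the diagonal of `a(R)` is
absolutely summable and `∑_k |⟪e_k, a(R) e_k⟫| ≤ C' R^{m+1}`, so `tr a(R) = O(R^{m+1})`. -/
theorem trace_estimate_of_order_m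
    (m : ℝ) (hm : m < -1) (a : ℝ → (l2Z →L[ℂ] l2Z)) (C : ℝ) (hC : 0 < C)
    (h : ∀ R : ℝ, 1 ≤ R → ∀ u : l2Z,
      Summable (fun n : ℤ => ‖(a R u) n‖ ^ 2 * ((n : ℝ) ^ 2 + R ^ 2) ^ (-m)) ∧
      ∑' n : ℤ, ‖(a R u) n‖ ^ 2 * ((n : ℝ) ^ 2 + R ^ 2) ^ (-m) ≤
        C ^ 2 * ∑' n : ℤ, ‖u n‖ ^ 2) :
    ∃ C' : ℝ, 0 < C' ∧ ∀ R : ℝ, 1 ≤ R →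
      Summable (fun k : ℤ => ‖matrixEntry (a R) k k‖) ∧
      ∑' k : ℤ, ‖matrixEntry (a R) k k‖ ≤ C' * R ^ (m + 1) := by
  set D := C * 2 ^ (-(m / 2))
  have hK : 0 < 1 - 2 / (m + 1) := by
    have : 2 / (m + 1) < 0 := div_neg_of_pos_of_neg two_pos (by linarith)
    linarith
  refine ⟨D * (1 - 2 / (m + 1)), by positivity, fun R hR => ?_⟩
  have hR0 : 0 < R := by linarith
  have hdiag (k : ℤ) : ‖matrixEntry (a R) k k‖ ≤ D * (|(k : ℝ)| + R) ^ m :=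
    norm_matrixEntry_self_le (by linarith) hR0 hC.le (h R hR (e k))
  have hmajorant := ((hasSum_int_abs_add_rpow hm hR0).summable).mul_left D
  have hsummable := hmajorant.of_nonneg_of_le (fun _ => norm_nonneg _) hdiag
  refine ⟨hsummable, ?_⟩
  calc ∑' k : ℤ, ‖matrixEntry (a R) k k‖ ≤ ∑' k : ℤ, D * (|(k : ℝ)| + R) ^ m :=
        hsummable.tsum_le_tsum hdiag hmajorant
    _ = D * ∑' k : ℤ, (|(k : ℝ)| + R) ^ m := tsum_mul_left
    _ ≤ D * ((1 - 2 / (m + 1)) * R ^ (m + 1)) :=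
        mul_le_mul_of_nonneg_left (tsum_int_abs_add_rpow_le hm hR) (by positivity)
    _ = D * (1 - 2 / (m + 1)) * R ^ (m + 1) := by ring
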